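/- Let S, L₁, I, L₂, R : [0, ∞) → ℝ solve the TB control system with continuous controls u₁, u₂ : [0, ∞) → [0,1], and suppose the initial condition lies in the set Δ = {(S, L₁, I, L₂, R) ∈ ℝ⁵ : all components ≥ 0 and S + L₁ + I + L₂ + R = N}. Then Δ is positively invariant: (S(t), L₁(t), I(t), L₂(t), R(t)) ∈ Δ for every t ≥ 0; in particular, 0 ≤ S(t), L₁(t), I(t), L₂(t), R(t) ≤ N for all t ≥ 0. -/

import Mathlib

/-!
The total population `W = S + L₁ + I + L₂ + R` solves `W' = μ (N - W)`, so `W ≡ N` by uniqueness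
for this linear equation. For nonnegativity, take `V = Σ min(xᵢ, 0)²`, a `C¹` function of the
state vanishing exactly on the nonnegative orthant. On a compact time interval the solution is
bounded, and the vector field is quasi-positive: the terms of `xᵢ'` not proportional to `xᵢ`
are nonnegative multiples of other components or of products of them, so against `min(xᵢ, 0)`
they are controlled by the negative parts of those components. This gives `V' ≤ K V`, and
`V(0) = 0` forces `V ≡ 0` by Grönwall's inequality.
-/

open Set Filter Topology

def tbSimplex (N : ℝ) : Set (ℝ × ℝ × ℝ × ℝ × ℝ) :=
  {x | 0 ≤ x.1 ∧ 0 ≤ x.2.1 ∧ 0 ≤ x.2.2.1 ∧ 0 ≤ x.2.2.2.1 ∧ 0 ≤ x.2.2.2.2 ∧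
      x.1 + x.2.1 + x.2.2.1 + x.2.2.2.1 + x.2.2.2.2 = N}

theorem min_zero_mul_self (x : ℝ) : min x 0 * x = min x 0 ^ 2 := by
  rcases le_total x 0 with h | h <;> simp [h, sq]

theorem hasDerivAt_min_zero_sq (x : ℝ) :
    HasDerivAt (fun y : ℝ => min y 0 ^ 2) (2 * min x 0) x := by
  rcases lt_trichotomy x 0 with hx | rfl | hx
  · have hloc : (fun y : ℝ => min y 0 ^ 2) =ᶠ[𝓝 x] fun y => y ^ 2 := by
      filter_upwards [Iio_mem_nhds hx] with y hy
      rw [min_eq_left hy.le]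
    rw [min_eq_left hx.le]
    simpa using (hasDerivAt_pow 2 x).congr_of_eventuallyEq hloc
  · rw [hasDerivAt_iff_isLittleO_nhds_zero]
    simp only [zero_add, min_self, ne_eq, OfNat.ofNat_ne_zero, not_false_eq_true, zero_pow,
      sub_zero, mul_zero, smul_zero]
    refine (Asymptotics.IsBigO.of_bound 1 (Eventually.of_forall fun y => ?_)).trans_isLittleO
      (Asymptotics.isLittleO_pow_id one_lt_two)
    rcases le_total y 0 with h | h <;> simp [h]
  · have hloc : (fun y : ℝ => min y 0 ^ 2) =ᶠ[𝓝 x] fun _ => 0 := by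
      filter_upwards [Ioi_mem_nhds hx] with y hy
      simp [le_of_lt (mem_Ioi.1 hy)]
    rw [min_eq_right hx.le, mul_zero]
    exact (hasDerivAt_const x 0).congr_of_eventuallyEq hloc

theorem HasDerivWithinAt.min_zero_sq {f : ℝ → ℝ} {f' x : ℝ} {s : Set ℝ}
    (hf : HasDerivWithinAt f f' s x) :
    HasDerivWithinAt (fun y => min (f y) 0 ^ 2) (2 * min (f x) 0 * f') s x :=
  (hasDerivAt_min_zero_sq (f x)).comp_hasDerivWithinAt x hf

theorem nonpos_of_hasDerivWithinAt_le_mul_self {f f' : ℝ → ℝ} {K a b : ℝ}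
    (hf : ContinuousOn f (Icc a b)) (hf' : ∀ x ∈ Ico a b, HasDerivWithinAt f (f' x) (Ici x) x)
    (ha : f a ≤ 0) (bound : ∀ x ∈ Ico a b, f' x ≤ K * f x) :
    ∀ x ∈ Icc a b, f x ≤ 0 := by
  intro x hx
  calc f x ≤ gronwallBound 0 K 0 (x - a) :=
        le_gronwallBound_of_liminf_deriv_right_le hf
          (fun x hx _ hr => (hf' x hx).liminf_right_slope_le hr) ha
          (by simpa using bound) x hx
    _ = 0 := gronwallBound_ε0_δ0 K _

theorem eq_of_hasDerivWithinAt_mul_sub {f : ℝ → ℝ} {c A : ℝ}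
    (hf : ∀ t ∈ Ici 0, HasDerivWithinAt f (c * (f t - A)) (Ici 0) t) (h0 : f 0 = A) :
    ∀ t ∈ Ici 0, f t = A := by
  intro t ht
  have hg : ∀ y ∈ Ici 0, HasDerivWithinAt (fun y => f y - A) (c * (f y - A)) (Ici 0) y :=
    fun y hy => (hf y hy).sub_const A
  have := eq_zero_of_abs_deriv_le_mul_abs_self_of_eq_zero_right (K := |c|)
    (fun y hy => (hg y hy.1).continuousWithinAt.mono Icc_subset_Ici_self)
    (fun y hy => (hg y hy.1).mono (Ici_subset_Ici.2 hy.1)) (sub_eq_zero.2 h0)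
    (fun y _ => (norm_mul _ _).le) t ⟨ht, le_rfl⟩
  exact sub_eq_zero.1 this

section NegativePartEstimates

variable {x y a b c g k M Q : ℝ}

theorem min_zero_mul_neg_mul_self_le (hk : 0 ≤ k) (hg : -k ≤ g) (hQ : min x 0 ^ 2 ≤ Q) :
    min x 0 * -(g * x) ≤ k * Q :=
  calc min x 0 * -(g * x) = -g * min x 0 ^ 2 := by rw [← min_zero_mul_self]; ring
    _ ≤ k * min x 0 ^ 2 := mul_le_mul_of_nonneg_right (by linarith) (sq_nonneg _)
    _ ≤ k * Q := mul_le_mul_of_nonneg_left hQ hk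

theorem min_zero_mul_mul_le (hc : 0 ≤ c) (hQ : min x 0 ^ 2 + min y 0 ^ 2 ≤ Q) :
    min x 0 * (c * y) ≤ c * Q := by
  have hmx : min x 0 ≤ 0 := min_le_right x 0
  have hmy : min y 0 ≤ 0 := min_le_right y 0
  have hxy : min x 0 * y ≤ min x 0 ^ 2 + min y 0 ^ 2 :=
    calc min x 0 * y ≤ min x 0 * min y 0 := mul_le_mul_of_nonpos_left (min_le_left y 0) hmx
      _ ≤ min x 0 ^ 2 + min y 0 ^ 2 := by nlinarith [sq_nonneg (min x 0 - min y 0)]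
  calc min x 0 * (c * y) = c * (min x 0 * y) := by ring
    _ ≤ c * Q := mul_le_mul_of_nonneg_left (hxy.trans hQ) hc

theorem mul_min_zero_add_min_zero_le_mul (ha : |a| ≤ M) (hb : |b| ≤ M) :
    M * (min a 0 + min b 0) ≤ a * b := by
  obtain ⟨ha₁, ha₂⟩ := abs_le.1 ha
  obtain ⟨hb₁, hb₂⟩ := abs_le.1 hb
  rcases le_total a 0 with h₁ | h₁ <;> rcases le_total b 0 with h₂ | h₂ <;>
    simp only [min_eq_left, min_eq_right, h₁, h₂] <;> nlinarith

theorem min_zero_mul_mul_mul_le (hc : 0 ≤ c) (ha : |a| ≤ M) (hb : |b| ≤ M)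
    (hQ : min x 0 ^ 2 + min a 0 ^ 2 + min b 0 ^ 2 ≤ Q) :
    min x 0 * (c * (a * b)) ≤ c * M * Q := by
  have hM : 0 ≤ M := (abs_nonneg a).trans ha
  have hmx : min x 0 ≤ 0 := min_le_right x 0
  have hma : min a 0 ≤ 0 := min_le_right a 0
  have hmb : min b 0 ≤ 0 := min_le_right b 0
  have hsq : min x 0 * min a 0 + min x 0 * min b 0 ≤ Q := by
    nlinarith [sq_nonneg (min x 0 - min a 0), sq_nonneg (min x 0 - min b 0)]
  calc min x 0 * (c * (a * b)) = c * (min x 0 * (a * b)) := by ring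
    _ ≤ c * (min x 0 * (M * (min a 0 + min b 0))) := mul_le_mul_of_nonneg_left
        (mul_le_mul_of_nonpos_left (mul_min_zero_add_min_zero_le_mul ha hb) hmx) hc
    _ = c * M * (min x 0 * min a 0 + min x 0 * min b 0) := by ring
    _ ≤ c * M * Q := mul_le_mul_of_nonneg_left hsq (mul_nonneg hc hM)

end NegativePartEstimates

theorem tb_rhs_quasipositive_estimate {b M μ N δ ω ωR σ σR τ0 τ1 τ2 φ v1 v2 s l1 i l2 r : ℝ}
    (hb : 0 ≤ b) (hμ : 0 ≤ μ) (hN : 0 ≤ N) (hδ : 0 ≤ δ) (hω : 0 ≤ ω) (hωR : 0 ≤ ωR)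
    (hσ : 0 ≤ σ) (hσR : 0 ≤ σR) (hτ0 : 0 ≤ τ0) (hτ1 : 0 ≤ τ1) (hτ2 : 0 ≤ τ2)
    (hφ : φ ∈ Icc (0 : ℝ) 1) (hv1 : v1 ∈ Icc (0 : ℝ) 1) (hv2 : v2 ∈ Icc (0 : ℝ) 1)
    (hs : |s| ≤ M) (hi : |i| ≤ M) (hl2 : |l2| ≤ M) (hr : |r| ≤ M) :
    2 * min s 0 * (μ * N - b * i * s - μ * s)
      + 2 * min l1 0 * (b * i * (s + σ * l2 + σR * r) - (δ + τ1 * v1 + μ) * l1)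
      + 2 * min i 0 * (φ * δ * l1 + ω * l2 + ωR * r - (τ0 + μ) * i)
      + 2 * min l2 0 * ((1 - φ) * δ * l1 - σ * b * i * l2 - (ω + τ2 * v2 + μ) * l2)
      + 2 * min r 0 * (τ0 * i + τ1 * v1 * l1 + τ2 * v2 * l2 - σR * b * i * r - (ωR + μ) * r)
    ≤ 2 * (2 * b * M * (1 + σ + σR) + δ + ω + ωR + τ0 + τ1 + τ2) *
      (min s 0 ^ 2 + min l1 0 ^ 2 + min i 0 ^ 2 + min l2 0 ^ 2 + min r 0 ^ 2) := by
  set Q := min s 0 ^ 2 + min l1 0 ^ 2 + min i 0 ^ 2 + min l2 0 ^ 2 + min r 0 ^ 2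
  have q₁ := sq_nonneg (min s 0)
  have q₂ := sq_nonneg (min l1 0)
  have q₃ := sq_nonneg (min i 0)
  have q₄ := sq_nonneg (min l2 0)
  have q₅ := sq_nonneg (min r 0)
  have hbM : 0 ≤ b * M := mul_nonneg hb ((abs_nonneg i).trans hi)
  have hbi : -(b * M) ≤ b * i := by
    linarith [mul_le_mul_of_nonneg_left ((neg_le_neg hi).trans (neg_abs_le i)) hb]
  have e₁ : min s 0 * (μ * N) ≤ 0 :=
    mul_nonpos_of_nonpos_of_nonneg (min_le_right s 0) (mul_nonneg hμ hN)
  have e₂ : min s 0 * -((b * i + μ) * s) ≤ b * M * Q :=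
    min_zero_mul_neg_mul_self_le hbM (by linarith) (by linarith)
  have e₃ : min l1 0 * (b * (i * s)) ≤ b * M * Q :=
    min_zero_mul_mul_mul_le hb hi hs (by linarith)
  have e₄ : min l1 0 * (b * σ * (i * l2)) ≤ b * σ * M * Q :=
    min_zero_mul_mul_mul_le (mul_nonneg hb hσ) hi hl2 (by linarith)
  have e₅ : min l1 0 * (b * σR * (i * r)) ≤ b * σR * M * Q :=
    min_zero_mul_mul_mul_le (mul_nonneg hb hσR) hi hr (by linarith)
  have e₆ : min l1 0 * -((δ + τ1 * v1 + μ) * l1) ≤ 0 * Q :=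
    min_zero_mul_neg_mul_self_le le_rfl (by linarith [mul_nonneg hτ1 hv1.1]) (by linarith)
  have e₇ : min i 0 * (φ * δ * l1) ≤ φ * δ * Q :=
    min_zero_mul_mul_le (mul_nonneg hφ.1 hδ) (by linarith)
  have e₈ : min i 0 * (ω * l2) ≤ ω * Q := min_zero_mul_mul_le hω (by linarith)
  have e₉ : min i 0 * (ωR * r) ≤ ωR * Q := min_zero_mul_mul_le hωR (by linarith)
  have e₁₀ : min i 0 * -((τ0 + μ) * i) ≤ 0 * Q :=
    min_zero_mul_neg_mul_self_le le_rfl (by linarith) (by linarith)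
  have e₁₁ : min l2 0 * ((1 - φ) * δ * l1) ≤ (1 - φ) * δ * Q :=
    min_zero_mul_mul_le (mul_nonneg (sub_nonneg.2 hφ.2) hδ) (by linarith)
  have e₁₂ : min l2 0 * -((σ * b * i + ω + τ2 * v2 + μ) * l2) ≤ σ * (b * M) * Q :=
    min_zero_mul_neg_mul_self_le (mul_nonneg hσ hbM)
      (by linarith [mul_le_mul_of_nonneg_left hbi hσ, mul_nonneg hτ2 hv2.1]) (by linarith)
  have e₁₃ : min r 0 * (τ0 * i) ≤ τ0 * Q := min_zero_mul_mul_le hτ0 (by linarith)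
  have e₁₄ : min r 0 * (τ1 * v1 * l1) ≤ τ1 * v1 * Q :=
    min_zero_mul_mul_le (mul_nonneg hτ1 hv1.1) (by linarith)
  have e₁₅ : min r 0 * (τ2 * v2 * l2) ≤ τ2 * v2 * Q :=
    min_zero_mul_mul_le (mul_nonneg hτ2 hv2.1) (by linarith)
  have e₁₆ : min r 0 * -((σR * b * i + ωR + μ) * r) ≤ σR * (b * M) * Q :=
    min_zero_mul_neg_mul_self_le (mul_nonneg hσR hbM)
      (by linarith [mul_le_mul_of_nonneg_left hbi hσR]) (by linarith)
  have hQ : 0 ≤ Q := by positivity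
  have hv₁Q : τ1 * v1 * Q ≤ τ1 * Q :=
    mul_le_mul_of_nonneg_right (mul_le_of_le_one_right hτ1 hv1.2) hQ
  have hv₂Q : τ2 * v2 * Q ≤ τ2 * Q :=
    mul_le_mul_of_nonneg_right (mul_le_of_le_one_right hτ2 hv2.2) hQ
  linarith

/-- `b` stands for the incidence coefficient `β / N`. -/
structure IsTBSolution (b μ N δ ω ωR σ σR τ0 τ1 τ2 φ : ℝ) (u1 u2 S L1 I L2 R : ℝ → ℝ) :
    Prop where
  hasDerivWithinAt_S : ∀ t ∈ Ici (0 : ℝ),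
    HasDerivWithinAt S (μ * N - b * I t * S t - μ * S t) (Ici 0) t
  hasDerivWithinAt_L1 : ∀ t ∈ Ici (0 : ℝ),
    HasDerivWithinAt L1
      (b * I t * (S t + σ * L2 t + σR * R t) - (δ + τ1 * u1 t + μ) * L1 t) (Ici 0) t
  hasDerivWithinAt_I : ∀ t ∈ Ici (0 : ℝ),
    HasDerivWithinAt I (φ * δ * L1 t + ω * L2 t + ωR * R t - (τ0 + μ) * I t) (Ici 0) t
  hasDerivWithinAt_L2 : ∀ t ∈ Ici (0 : ℝ),
    HasDerivWithinAt L2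
      ((1 - φ) * δ * L1 t - σ * b * I t * L2 t - (ω + τ2 * u2 t + μ) * L2 t) (Ici 0) t
  hasDerivWithinAt_R : ∀ t ∈ Ici (0 : ℝ),
    HasDerivWithinAt R
      (τ0 * I t + τ1 * u1 t * L1 t + τ2 * u2 t * L2 t - σR * b * I t * R t - (ωR + μ) * R t)
      (Ici 0) t

namespace IsTBSolution

variable {b μ N δ ω ωR σ σR τ0 τ1 τ2 φ : ℝ} {u1 u2 S L1 I L2 R : ℝ → ℝ}

theorem total_eq (h : IsTBSolution b μ N δ ω ωR σ σR τ0 τ1 τ2 φ u1 u2 S L1 I L2 R)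
    (h0 : S 0 + L1 0 + I 0 + L2 0 + R 0 = N) :
    ∀ t ∈ Ici (0 : ℝ), S t + L1 t + I t + L2 t + R t = N :=
  eq_of_hasDerivWithinAt_mul_sub (c := -μ) (fun t ht =>
    ((((h.hasDerivWithinAt_S t ht).add (h.hasDerivWithinAt_L1 t ht)).add
      (h.hasDerivWithinAt_I t ht)).add (h.hasDerivWithinAt_L2 t ht)).add
      (h.hasDerivWithinAt_R t ht) |>.congr_deriv (by ring)) h0

theorem nonneg (h : IsTBSolution b μ N δ ω ωR σ σR τ0 τ1 τ2 φ u1 u2 S L1 I L2 R)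
    (hb : 0 ≤ b) (hμ : 0 ≤ μ) (hN : 0 ≤ N) (hδ : 0 ≤ δ) (hω : 0 ≤ ω) (hωR : 0 ≤ ωR)
    (hσ : 0 ≤ σ) (hσR : 0 ≤ σR) (hτ0 : 0 ≤ τ0) (hτ1 : 0 ≤ τ1) (hτ2 : 0 ≤ τ2)
    (hφ : φ ∈ Icc (0 : ℝ) 1) (hu1 : ∀ t ∈ Ici (0 : ℝ), u1 t ∈ Icc (0 : ℝ) 1)
    (hu2 : ∀ t ∈ Ici (0 : ℝ), u2 t ∈ Icc (0 : ℝ) 1)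
    (hS0 : 0 ≤ S 0) (hL10 : 0 ≤ L1 0) (hI0 : 0 ≤ I 0) (hL20 : 0 ≤ L2 0) (hR0 : 0 ≤ R 0) :
    ∀ t ∈ Ici (0 : ℝ), 0 ≤ S t ∧ 0 ≤ L1 t ∧ 0 ≤ I t ∧ 0 ≤ L2 t ∧ 0 ≤ R t := by
  intro t ht
  have hX : ContinuousOn (fun y => (S y, L1 y, I y, L2 y, R y)) (Icc 0 t) := fun y hy =>
    have hy : y ∈ Ici (0 : ℝ) := hy.1
    ((h.hasDerivWithinAt_S y hy).continuousWithinAt.prodMk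
      ((h.hasDerivWithinAt_L1 y hy).continuousWithinAt.prodMk
      ((h.hasDerivWithinAt_I y hy).continuousWithinAt.prodMk
      ((h.hasDerivWithinAt_L2 y hy).continuousWithinAt.prodMk
      (h.hasDerivWithinAt_R y hy).continuousWithinAt)))).mono Icc_subset_Ici_self
  obtain ⟨M, hM⟩ := isCompact_Icc.exists_bound_of_continuousOn hX
  have hV := fun y (hy : y ∈ Ici (0 : ℝ)) =>
    ((((h.hasDerivWithinAt_S y hy).min_zero_sq.add (h.hasDerivWithinAt_L1 y hy).min_zero_sq).add
      (h.hasDerivWithinAt_I y hy).min_zero_sq).add (h.hasDerivWithinAt_L2 y hy).min_zero_sq).add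
      (h.hasDerivWithinAt_R y hy).min_zero_sq
  have hVt := nonpos_of_hasDerivWithinAt_le_mul_self
    (fun y hy => (hV y hy.1).continuousWithinAt.mono Icc_subset_Ici_self)
    (fun y hy => (hV y hy.1).mono (Ici_subset_Ici.2 hy.1))
    (by simp [hS0, hL10, hI0, hL20, hR0])
    (fun y hy => by
      have hy' : y ∈ Ici (0 : ℝ) := hy.1
      have hMy := hM y (Ico_subset_Icc_self hy)
      simp only [Prod.norm_def, Real.norm_eq_abs, max_le_iff] at hMy
      exact tb_rhs_quasipositive_estimate hb hμ hN hδ hω hωR hσ hσR hτ0 hτ1 hτ2 hφ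
        (hu1 y hy') (hu2 y hy') hMy.1 hMy.2.2.1 hMy.2.2.2.1 hMy.2.2.2.2)
    t ⟨ht, le_rfl⟩
  simp only [Pi.add_apply] at hVt
  refine ⟨?_, ?_, ?_, ?_, ?_⟩ <;>
  · rw [← min_eq_right_iff, ← sq_nonpos_iff]
    linarith [sq_nonneg (min (S t) 0), sq_nonneg (min (L1 t) 0), sq_nonneg (min (I t) 0),
      sq_nonneg (min (L2 t) 0), sq_nonneg (min (R t) 0)]

end IsTBSolution

theorem tb_simplex_positively_invariant_general
    (β μ δ ω ωR σ σR τ0 τ1 τ2 N φ : ℝ)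
    (hβ : 0 < β) (hμ : 0 < μ) (hδ : 0 < δ) (hω : 0 < ω) (hωR : 0 < ωR)
    (hσ : 0 < σ) (hσR : 0 < σR) (hτ0 : 0 < τ0) (hτ1 : 0 < τ1) (hτ2 : 0 < τ2)
    (hN : 0 < N) (hφ : φ ∈ Set.Ioo (0 : ℝ) 1)
    (u1 u2 : ℝ → ℝ)
    (hu1 : ∀ t ∈ Set.Ici (0 : ℝ), u1 t ∈ Set.Icc (0 : ℝ) 1)
    (hu2 : ∀ t ∈ Set.Ici (0 : ℝ), u2 t ∈ Set.Icc (0 : ℝ) 1)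
    (S L1 I L2 R : ℝ → ℝ)
    (hS : ∀ t ∈ Set.Ici (0 : ℝ),
      HasDerivWithinAt S (μ * N - β / N * I t * S t - μ * S t) (Set.Ici 0) t)
    (hL1 : ∀ t ∈ Set.Ici (0 : ℝ),
      HasDerivWithinAt L1
        (β / N * I t * (S t + σ * L2 t + σR * R t) - (δ + τ1 * u1 t + μ) * L1 t)
        (Set.Ici 0) t)
    (hI : ∀ t ∈ Set.Ici (0 : ℝ),
      HasDerivWithinAt I
        (φ * δ * L1 t + ω * L2 t + ωR * R t - (τ0 + μ) * I t) (Set.Ici 0) t)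
    (hL2 : ∀ t ∈ Set.Ici (0 : ℝ),
      HasDerivWithinAt L2
        ((1 - φ) * δ * L1 t - σ * (β / N) * I t * L2 t - (ω + τ2 * u2 t + μ) * L2 t)
        (Set.Ici 0) t)
    (hR : ∀ t ∈ Set.Ici (0 : ℝ),
      HasDerivWithinAt R
        (τ0 * I t + τ1 * u1 t * L1 t + τ2 * u2 t * L2 t
          - σR * (β / N) * I t * R t - (ωR + μ) * R t) (Set.Ici 0) t)
    (hx0 : (S 0, L1 0, I 0, L2 0, R 0) ∈ tbSimplex N) :
    ∀ t ∈ Set.Ici (0 : ℝ),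
      (S t, L1 t, I t, L2 t, R t) ∈ tbSimplex N ∧
      S t ∈ Set.Icc 0 N ∧ L1 t ∈ Set.Icc 0 N ∧ I t ∈ Set.Icc 0 N ∧
      L2 t ∈ Set.Icc 0 N ∧ R t ∈ Set.Icc 0 N := by
  obtain ⟨hS0, hL10, hI0, hL20, hR0, hsum0⟩ := hx0
  have hsol : IsTBSolution (β / N) μ N δ ω ωR σ σR τ0 τ1 τ2 φ u1 u2 S L1 I L2 R :=
    ⟨hS, hL1, hI, hL2, hR⟩
  intro t ht
  have hsum := hsol.total_eq hsum0 t ht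
  obtain ⟨hSt, hL1t, hIt, hL2t, hRt⟩ := hsol.nonneg (div_pos hβ hN).le hμ.le hN.le hδ.le hω.le
    hωR.le hσ.le hσR.le hτ0.le hτ1.le hτ2.le (Ioo_subset_Icc_self hφ) hu1 hu2
    hS0 hL10 hI0 hL20 hR0 t ht
  exact ⟨⟨hSt, hL1t, hIt, hL2t, hRt, hsum⟩, ⟨hSt, by linarith⟩, ⟨hL1t, by linarith⟩,
    ⟨hIt, by linarith⟩, ⟨hL2t, by linarith⟩, ⟨hRt, by linarith⟩⟩

/-- The simplex `Δ` is positively invariant for the TB control system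
with continuous controls taking values in `[0,1]`: solutions starting in `Δ` remain in
`Δ` for all `t ≥ 0`; in particular every component stays in `[0, N]`. -/
theorem tb_simplex_positively_invariant
    (β μ δ ω ωR σ σR τ0 τ1 τ2 N φ : ℝ)
    (hβ : 0 < β) (hμ : 0 < μ) (hδ : 0 < δ) (hω : 0 < ω) (hωR : 0 < ωR)
    (hσ : 0 < σ) (hσR : 0 < σR) (hτ0 : 0 < τ0) (hτ1 : 0 < τ1) (hτ2 : 0 < τ2)
    (hN : 0 < N) (hφ : φ ∈ Set.Ioo (0 : ℝ) 1)
    (u1 u2 : ℝ → ℝ)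
    (hu1c : ContinuousOn u1 (Set.Ici 0)) (hu2c : ContinuousOn u2 (Set.Ici 0))
    (hu1 : ∀ t ∈ Set.Ici (0 : ℝ), u1 t ∈ Set.Icc (0 : ℝ) 1)
    (hu2 : ∀ t ∈ Set.Ici (0 : ℝ), u2 t ∈ Set.Icc (0 : ℝ) 1)
    (S L1 I L2 R : ℝ → ℝ)
    (hS : ∀ t ∈ Set.Ici (0 : ℝ),
      HasDerivWithinAt S (μ * N - β / N * I t * S t - μ * S t) (Set.Ici 0) t)
    (hL1 : ∀ t ∈ Set.Ici (0 : ℝ),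
      HasDerivWithinAt L1
        (β / N * I t * (S t + σ * L2 t + σR * R t) - (δ + τ1 * u1 t + μ) * L1 t)
        (Set.Ici 0) t)
    (hI : ∀ t ∈ Set.Ici (0 : ℝ),
      HasDerivWithinAt I
        (φ * δ * L1 t + ω * L2 t + ωR * R t - (τ0 + μ) * I t) (Set.Ici 0) t)
    (hL2 : ∀ t ∈ Set.Ici (0 : ℝ),
      HasDerivWithinAt L2
        ((1 - φ) * δ * L1 t - σ * (β / N) * I t * L2 t - (ω + τ2 * u2 t + μ) * L2 t)
        (Set.Ici 0) t)
    (hR : ∀ t ∈ Set.Ici (0 : ℝ),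
      HasDerivWithinAt R
        (τ0 * I t + τ1 * u1 t * L1 t + τ2 * u2 t * L2 t
          - σR * (β / N) * I t * R t - (ωR + μ) * R t) (Set.Ici 0) t)
    (hx0 : (S 0, L1 0, I 0, L2 0, R 0) ∈ tbSimplex N) :
    ∀ t ∈ Set.Ici (0 : ℝ),
      (S t, L1 t, I t, L2 t, R t) ∈ tbSimplex N ∧
      S t ∈ Set.Icc 0 N ∧ L1 t ∈ Set.Icc 0 N ∧ I t ∈ Set.Icc 0 N ∧
      L2 t ∈ Set.Icc 0 N ∧ R t ∈ Set.Icc 0 N :=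
  tb_simplex_positively_invariant_general β μ δ ω ωR σ σR τ0 τ1 τ2 N φ hβ hμ hδ hω hωR hσ hσR hτ0
    hτ1 hτ2 hN hφ u1 u2 hu1 hu2 S L1 I L2 R hS hL1 hI hL2 hR hx0
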